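/- Let ψ : Fin a × Fin b → ℂ be a unit vector, ρ = ψ ψᴴ, μ : Fin (a*b) → ℝ the eigenvalues of ρ^Γ, and ν : Fin a → ℝ the (nonnegative) eigenvalues of the reduced matrix ρ_A. Then for every real α > 0: ∑ i, |μ i|^α = ( ∑ i, (ν i)^(α/2) )², where powers are real powers. Equivalently, for pure states the p_α-negativity coincides with the α/2-Rényi entanglement entropy, E_α(ρ) = S_{α/2}(ρ_A), for every α. -/

import Mathlib

open Matrix BigOperators ComplexOrder

/-- Partial transpose on the second tensor factor:
`ρ^Γ ((i,j),(k,l)) = ρ ((i,l),(k,j))`. -/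
def PT {α β : Type*} (ρ : Matrix (α × β) (α × β) ℂ) : Matrix (α × β) (α × β) ℂ :=
  fun x y => ρ (x.1, y.2) (y.1, x.2)

section Helpers
open Polynomial Kronecker
set_option linter.unusedSectionVars false

lemma my_eval_charpoly {n : Type*} [Fintype n] [DecidableEq n] (A : Matrix n n ℂ) (x : ℂ) :
    A.charpoly.eval x = (x • (1 : Matrix n n ℂ) - A).det := by
  rw [Matrix.charpoly, ← Polynomial.coe_evalRingHom, RingHom.map_det]
  congr 1
  ext i j
  by_cases h : i = j
  · subst h
    simp [charmatrix_apply_eq, Matrix.smul_apply, Matrix.one_apply]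
  · simp [charmatrix_apply_ne _ _ _ h, Matrix.smul_apply, Matrix.one_apply_ne h,
      Matrix.sub_apply]

lemma my_charpoly_conj {n : Type*} [Fintype n] [DecidableEq n] (U D : Matrix n n ℂ)
    (hU : U * star U = 1) : (U * D * star U).charpoly = D.charpoly := by
  have hU' : star U * U = 1 := mul_eq_one_comm.mp hU
  apply Polynomial.funext
  intro x
  rw [my_eval_charpoly, my_eval_charpoly]
  have key : x • (1 : Matrix n n ℂ) - U * D * star U = U * (x • 1 - D) * star U := by
    rw [Matrix.mul_sub, Matrix.sub_mul, Matrix.mul_smul, Matrix.mul_one,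
      Matrix.smul_mul, hU]
  rw [key, Matrix.det_mul, Matrix.det_mul, mul_comm, ← mul_assoc, ← Matrix.det_mul, hU']
  simp

lemma my_charpoly_diagonal {n : Type*} [Fintype n] [DecidableEq n] (d : n → ℂ) :
    (Matrix.diagonal d).charpoly = ∏ i, (X - C (d i)) := by
  have : charmatrix (Matrix.diagonal d) = Matrix.diagonal fun i => X - C (d i) := by
    ext i j
    by_cases h : i = j
    · subst h; simp [charmatrix_apply_eq]
    · simp [charmatrix_apply_ne _ _ _ h, Matrix.diagonal_apply_ne _ h]
  rw [Matrix.charpoly, this, Matrix.det_diagonal]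

variable {n m : Type*} [Fintype n] [DecidableEq n] [Fintype m] [DecidableEq m]

lemma my_charpoly_mul_comm (M : Matrix n m ℂ) (N : Matrix m n ℂ) :
    (M * N).charpoly * X ^ (Fintype.card m) = (N * M).charpoly * X ^ (Fintype.card n) := by
  have h : ∀ x : ℂ, x ≠ 0 →
      ((M * N).charpoly * X ^ (Fintype.card m)).eval x
        = ((N * M).charpoly * X ^ (Fintype.card n)).eval x := by
    intro x hx
    have e1 : x • (1 : Matrix n n ℂ) - M * N = x • (1 - x⁻¹ • (M * N)) := by
      rw [smul_sub, smul_smul, mul_inv_cancel₀ hx, one_smul]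
    have e2 : x • (1 : Matrix m m ℂ) - N * M = x • (1 - x⁻¹ • (N * M)) := by
      rw [smul_sub, smul_smul, mul_inv_cancel₀ hx, one_smul]
    have e3 : (1 : Matrix n n ℂ) - x⁻¹ • (M * N) = 1 - (x⁻¹ • M) * N := by
      rw [Matrix.smul_mul]
    have e4 : (1 : Matrix m m ℂ) - x⁻¹ • (N * M) = 1 - N * (x⁻¹ • M) := by
      rw [Matrix.mul_smul]
    simp only [eval_mul, eval_pow, eval_X, my_eval_charpoly]
    rw [e1, e2, Matrix.det_smul, Matrix.det_smul, e3, e4,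
      Matrix.det_one_sub_mul_comm]
    ring
  have hzero : ((M * N).charpoly * X ^ (Fintype.card m)
      - (N * M).charpoly * X ^ (Fintype.card n)) = 0 := by
    apply Polynomial.eq_zero_of_infinite_isRoot
    apply Set.Infinite.mono (s := {(0 : ℂ)}ᶜ)
    · intro x hx
      simp only [Set.mem_setOf_eq, IsRoot, eval_sub, sub_eq_zero]
      exact h x hx
    · exact Set.Finite.infinite_compl (Set.finite_singleton 0)
  exact sub_eq_zero.mp hzero

lemma my_roots_prod (k : Type*) [Fintype k] [DecidableEq k] (u : k → ℂ) :
    (∏ i, (X - C (u i))).roots = Finset.univ.val.map u := by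
  rw [← Polynomial.roots_multiset_prod_X_sub_C (Finset.univ.val.map u)]
  congr 1
  rw [Multiset.map_map]
  rfl

lemma my_roots_based (f : n → ℝ) (g : m → ℝ)
    (h : (Finset.univ.val.map fun i => ((f i : ℂ))) = Finset.univ.val.map fun j => ((g j : ℂ))) :
    ∀ F : ℝ → ℝ, ∑ i, F (f i) = ∑ j, F (g j) := by
  intro F
  have := congrArg (fun s : Multiset ℂ => (s.map fun z => F z.re).sum) h
  simpa [Multiset.map_map, Function.comp] using this

lemma my_prod_eq_roots {f : n → ℝ} {g : m → ℝ}
    (h : (∏ i, (X - C ((f i : ℂ)))) = ∏ j, (X - C ((g j : ℂ)))) :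
    (Finset.univ.val.map fun i => ((f i : ℂ))) = Finset.univ.val.map fun j => ((g j : ℂ)) := by
  calc Finset.univ.val.map (fun i => ((f i : ℂ)))
      = (∏ i, (X - C ((f i : ℂ)))).roots := (my_roots_prod n (fun i => ((f i : ℂ)))).symm
    _ = (∏ j, (X - C ((g j : ℂ)))).roots := by rw [h]
    _ = Finset.univ.val.map fun j => ((g j : ℂ)) := my_roots_prod m (fun j => ((g j : ℂ)))

lemma my_sum_eq_of_padded (f : n → ℝ) (g : m → ℝ)
    (h : (∏ i, (X - C ((f i : ℂ)))) * X ^ (Fintype.card m)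
        = (∏ j, (X - C ((g j : ℂ)))) * X ^ (Fintype.card n))
    (F : ℝ → ℝ) (hF0 : F 0 = 0) : ∑ i, F (f i) = ∑ j, F (g j) := by
  have hne1 : (∏ i, (X - C ((f i : ℂ)))) * X ^ (Fintype.card m) ≠ 0 := by
    apply mul_ne_zero
    · exact (monic_prod_of_monic _ _ fun i _ => monic_X_sub_C _).ne_zero
    · exact pow_ne_zero _ X_ne_zero
  have hne2 : (∏ j, (X - C ((g j : ℂ)))) * X ^ (Fintype.card n) ≠ 0 := by
    apply mul_ne_zero
    · exact (monic_prod_of_monic _ _ fun i _ => monic_X_sub_C _).ne_zero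
    · exact pow_ne_zero _ X_ne_zero
  have hr := congrArg Polynomial.roots h
  rw [Polynomial.roots_mul hne1, Polynomial.roots_mul hne2, Polynomial.roots_pow,
    Polynomial.roots_pow, Polynomial.roots_X,
    my_roots_prod n (fun i => ((f i : ℂ))), my_roots_prod m (fun j => ((g j : ℂ)))] at hr
  have := congrArg (fun s : Multiset ℂ => (s.map fun z => F z.re).sum) hr
  simp only [Multiset.map_add, Multiset.sum_add, Multiset.map_map, Function.comp,
    Multiset.nsmul_singleton, Multiset.map_replicate, Multiset.sum_replicate,
    Complex.ofReal_re, Complex.zero_re, hF0, smul_zero, add_zero] at this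
  simpa using this

lemma my_star_kronecker {n m p q : Type*} (A : Matrix n m ℂ) (B : Matrix p q ℂ) :
    (A ⊗ₖ B)ᴴ = (Aᴴ) ⊗ₖ (Bᴴ) := by
  ext ⟨i,j⟩ ⟨k,l⟩
  simp [Matrix.conjTranspose_apply, mul_comm]

lemma my_charpoly_hermitian (A : Matrix n n ℂ) (hA : A.IsHermitian) :
    A.charpoly = ∏ i, (X - C ((hA.eigenvalues i : ℂ))) := by
  conv_lhs => rw [hA.spectral_theorem, Unitary.conjStarAlgAut_apply]
  rw [my_charpoly_conj _ _ (Matrix.mem_unitaryGroup_iff.mp (hA.eigenvectorUnitary).2),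
    my_charpoly_diagonal]
  rfl

lemma my_charpoly_hermitian_sq (A : Matrix n n ℂ) (hA : A.IsHermitian) :
    (A * A).charpoly = ∏ i, (X - C (((hA.eigenvalues i : ℂ)) * (hA.eigenvalues i : ℂ))) := by
  have hU := Matrix.mem_unitaryGroup_iff.mp (hA.eigenvectorUnitary).2
  have hU' : star (hA.eigenvectorUnitary : Matrix n n ℂ) * hA.eigenvectorUnitary = 1 :=
    mul_eq_one_comm.mp hU
  have key : A * A = (hA.eigenvectorUnitary : Matrix n n ℂ)
      * Matrix.diagonal (fun i => ((hA.eigenvalues i : ℂ)) * (hA.eigenvalues i : ℂ))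
      * star (hA.eigenvectorUnitary : Matrix n n ℂ) := by
    have hdd : Matrix.diagonal (RCLike.ofReal ∘ hA.eigenvalues)
        * Matrix.diagonal (RCLike.ofReal ∘ hA.eigenvalues)
        = Matrix.diagonal (fun i => ((hA.eigenvalues i : ℂ)) * (hA.eigenvalues i : ℂ)) := by
      rw [Matrix.diagonal_mul_diagonal]; rfl
    conv_lhs => rw [hA.spectral_theorem, Unitary.conjStarAlgAut_apply]
    rw [← hdd]
    simp only [Matrix.mul_assoc]
    congr 2
    rw [← Matrix.mul_assoc (star _), hU', Matrix.one_mul]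
  rw [key, my_charpoly_conj _ _ hU, my_charpoly_diagonal]

lemma my_charpoly_kronecker (A : Matrix n n ℂ) (B : Matrix m m ℂ)
    (hA : A.IsHermitian) (hB : B.IsHermitian) :
    (A ⊗ₖ B).charpoly
      = ∏ p : n × m, (X - C (((hA.eigenvalues p.1 : ℂ)) * (hB.eigenvalues p.2 : ℂ))) := by
  set U := (hA.eigenvectorUnitary : Matrix n n ℂ)
  set V := (hB.eigenvectorUnitary : Matrix m m ℂ)
  have hU := Matrix.mem_unitaryGroup_iff.mp (hA.eigenvectorUnitary).2
  have hV := Matrix.mem_unitaryGroup_iff.mp (hB.eigenvectorUnitary).2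
  have key : A ⊗ₖ B = (U ⊗ₖ V)
      * Matrix.diagonal (fun p : n × m => ((hA.eigenvalues p.1 : ℂ)) * (hB.eigenvalues p.2 : ℂ))
      * star (U ⊗ₖ V) := by
    have hst : star (U ⊗ₖ V) = (star U) ⊗ₖ (star V) := by
      simp only [Matrix.star_eq_conjTranspose]; exact my_star_kronecker U V
    conv_lhs => rw [hA.spectral_theorem, hB.spectral_theorem, Unitary.conjStarAlgAut_apply,
      Unitary.conjStarAlgAut_apply]
    rw [Matrix.mul_kronecker_mul, Matrix.mul_kronecker_mul, Matrix.diagonal_kronecker_diagonal,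
      hst]
    rfl
  have hUV : (U ⊗ₖ V) * star (U ⊗ₖ V) = 1 := by
    have hst : star (U ⊗ₖ V) = (star U) ⊗ₖ (star V) := by
      simp only [Matrix.star_eq_conjTranspose]; exact my_star_kronecker U V
    rw [hst, ← Matrix.mul_kronecker_mul, hU, hV, Matrix.one_kronecker_one]
  rw [key, my_charpoly_conj _ _ hUV, my_charpoly_diagonal]

end Helpers

/-- For a pure state `ρ = ψψᴴ` with PT eigenvalues `μ` and reduced-state eigenvalues
`ν`, one has `∑ᵢ |μᵢ|^α = (∑ᵢ νᵢ^(α/2))²` for every real `α > 0`; equivalently, the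
p_α-negativity coincides with the α/2-Rényi entanglement entropy,
`E_α(ρ) = S_{α/2}(ρ_A)`. -/
theorem pure_state_p_alpha_moments {a b : ℕ}
    (ψ : Fin a × Fin b → ℂ) (hunit : ∑ x, ‖ψ x‖ ^ 2 = 1)
    (ρ : Matrix (Fin a × Fin b) (Fin a × Fin b) ℂ)
    (hρ : ∀ x y, ρ x y = ψ x * star (ψ y))
    (hΓ : (PT ρ).IsHermitian)
    (ρA : Matrix (Fin a) (Fin a) ℂ)
    (hρA : ∀ i k, ρA i k = ∑ j, ρ (i, j) (k, j))
    (hApsd : ρA.PosSemidef) :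
    ∀ α : ℝ, 0 < α →
      ∑ i, |hΓ.eigenvalues i| ^ α
        = (∑ i, hApsd.isHermitian.eigenvalues i ^ (α / 2)) ^ 2 := by
  intro α hα
  classical
  open Polynomial Kronecker in
  set μ := hΓ.eigenvalues with hμdef
  set ν := hApsd.isHermitian.eigenvalues with hνdef
  set M : Matrix (Fin a) (Fin b) ℂ := Matrix.of (fun i j => ψ (i, j)) with hMdef
  have hAM : ρA = M * Mᴴ := by
    ext i k
    rw [hρA]
    simp [Matrix.mul_apply, Matrix.conjTranspose_apply, hρ, hMdef]
  set B := Mᴴ * M with hBdef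
  have hBps : B.PosSemidef := Matrix.posSemidef_conjTranspose_mul_self M
  set σ := hBps.isHermitian.eigenvalues with hσdef
  -- Step 1 : (PT ρ)² = ρA ⊗ₖ B
  have hsq : PT ρ * PT ρ = ρA ⊗ₖ B := by
    ext ⟨i, j⟩ ⟨k, l⟩
    rw [Matrix.mul_apply, Matrix.kroneckerMap_apply, hρA, Fintype.sum_prod_type]
    have hBjl : B j l = ∑ p, star (ψ (p, j)) * ψ (p, l) := by
      simp [hBdef, Matrix.mul_apply, Matrix.conjTranspose_apply, hMdef]
    rw [hBjl, Finset.sum_mul_sum]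
    rw [Finset.sum_comm]
    apply Finset.sum_congr rfl
    intro p _
    apply Finset.sum_congr rfl
    intro q _
    simp only [PT, hρ]
    ring
  -- Step 2 : product equality for μ² and ν⬝σ
  have hpoly : (∏ i : Fin a × Fin b, (X - C ((μ i * μ i : ℝ) : ℂ)))
      = ∏ p : Fin a × Fin b, (X - C (((ν p.1 * σ p.2 : ℝ)) : ℂ)) := by
    have h1 := my_charpoly_hermitian_sq (PT ρ) hΓ
    have h2 := my_charpoly_kronecker ρA B hApsd.isHermitian hBps.isHermitian
    rw [hsq] at h1
    rw [← hμdef] at h1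
    rw [← hνdef, ← hσdef] at h2
    rw [h2] at h1
    simpa [Complex.ofReal_mul] using h1.symm
  have hmult := my_prod_eq_roots hpoly
  have hsum := my_roots_based _ _ hmult (fun t => t ^ (α / 2))
  -- LHS rewriting
  have hhalf : (2 : ℝ) * (α / 2) = α := by ring
  have hlhs : ∀ t : ℝ, (t * t) ^ (α / 2) = |t| ^ α := by
    intro t
    rw [← abs_mul_abs_self t, ← sq, ← Real.rpow_natCast |t| 2, ← Real.rpow_mul (abs_nonneg t)]
    congr 1
  -- RHS rewriting
  have hrhs : ∀ p : Fin a × Fin b, (ν p.1 * σ p.2) ^ (α / 2)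
      = ν p.1 ^ (α / 2) * σ p.2 ^ (α / 2) := fun p =>
    Real.mul_rpow (hApsd.eigenvalues_nonneg p.1) (hBps.eigenvalues_nonneg p.2)
  have hmain : ∑ i, |μ i| ^ α = (∑ i, ν i ^ (α / 2)) * (∑ j, σ j ^ (α / 2)) := by
    calc ∑ i, |μ i| ^ α = ∑ i, (μ i * μ i) ^ (α / 2) := by
          exact Finset.sum_congr rfl fun i _ => (hlhs (μ i)).symm
      _ = ∑ p : Fin a × Fin b, (ν p.1 * σ p.2) ^ (α / 2) := hsum
      _ = ∑ p : Fin a × Fin b, ν p.1 ^ (α / 2) * σ p.2 ^ (α / 2) :=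
          Finset.sum_congr rfl fun p _ => hrhs p
      _ = (∑ i, ν i ^ (α / 2)) * (∑ j, σ j ^ (α / 2)) := by
          rw [Finset.sum_mul_sum, Fintype.sum_prod_type]
  -- Step 3 : ∑ σ^(α/2) = ∑ ν^(α/2)
  have hνσ : ∑ i, ν i ^ (α / 2) = ∑ j, σ j ^ (α / 2) := by
    have hcp := my_charpoly_mul_comm M Mᴴ
    rw [← hAM, ← hBdef] at hcp
    rw [my_charpoly_hermitian ρA hApsd.isHermitian, my_charpoly_hermitian B hBps.isHermitian,
      ← hνdef, ← hσdef] at hcp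
    simp only [Fintype.card_fin] at hcp
    exact my_sum_eq_of_padded ν σ (by simpa using hcp) (fun t => t ^ (α / 2))
      (Real.zero_rpow (by positivity))
  rw [hmain, ← hνσ, sq]
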